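/- arXiv:1905.11041 — 4 statements merged into one kernel-verified Lean document; each statement's English description precedes it below -/
import Mathlib

section
/- Let y ∼ N(0, I_d) be a standard Gaussian vector in ℝ^d, μ, σ ∈ ℝ^d with σᵢ > 0, and f: ℝ^d → ℝ measurable with suitable integrability. Then the gradient with respect to μ of E[f(μ + y⊙σ)] equals (1/σ) ⊙ E[y · f(μ + y⊙σ)] (componentwise), where ⊙ denotes componentwise product. -/
open MeasureTheory ProbabilityTheory

open Real
open scoped NNReal ENNReal

namespace GradGaussAux

lemma integral_gaussianReal_eq (t : ℝ) {v : ℝ≥0} (hv : v ≠ 0) (g : ℝ → ℝ) :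
    ∫ x, g x ∂(gaussianReal t v) = ∫ x, gaussianPDFReal t v x * g x := by
  rw [gaussianReal_of_var_ne_zero t hv]
  have h1 : gaussianPDF t v
      = fun x => (((fun y => (gaussianPDFReal t v y).toNNReal) x : ℝ≥0) : ℝ≥0∞) := rfl
  rw [h1, integral_withDensity_eq_integral_smul
    ((measurable_gaussianPDFReal t v).real_toNNReal)]
  congr 1
  funext x
  rw [NNReal.smul_def, Real.coe_toNNReal _ (gaussianPDFReal_nonneg t v x), smul_eq_mul]

lemma map_affine (t s : ℝ) :
    Measure.map (fun y : ℝ => t + y * s) (gaussianReal 0 1)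
      = gaussianReal t ⟨s ^ 2, sq_nonneg s⟩ := by
  have h1 : (fun y : ℝ => t + y * s) = (fun x : ℝ => t + x) ∘ (fun y : ℝ => y * s) := rfl
  rw [h1, ← Measure.map_map (by fun_prop) (by fun_prop)]
  rw [show (fun y : ℝ => y * s) = (· * s) from rfl, gaussianReal_map_mul_const s]
  rw [show (fun x : ℝ => t + x) = (t + ·) from rfl, gaussianReal_map_const_add t]
  norm_num
  rfl

end GradGaussAux

namespace GradGaussAux

lemma pdf_hasDerivAt (v : ℝ≥0) (x t : ℝ) :
    HasDerivAt (fun t => gaussianPDFReal t v x)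
      ((x - t) / (v : ℝ) * gaussianPDFReal t v x) t := by
  have h0 : HasDerivAt (fun t : ℝ => x - t) (-1) t := (hasDerivAt_id t).const_sub x
  have h1 := (((h0.pow 2).neg.div_const (2 * (v : ℝ))).exp).const_mul (√(2 * π * (v : ℝ)))⁻¹
  refine h1.congr_deriv ?_
  simp only [gaussianPDFReal, Pi.neg_apply, Pi.pow_apply]
  ring

lemma integrable_abs_mul_exp (b : ℝ) (hb : 0 < b) :
    Integrable (fun u : ℝ => (|u| + 1) * rexp (-b * u ^ 2)) := by
  have h1 : Integrable (fun u : ℝ => |u| * rexp (-b * u ^ 2)) := by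
    have := (integrable_mul_exp_neg_mul_sq hb).abs
    refine this.congr ?_
    filter_upwards with u
    rw [abs_mul, abs_of_pos (exp_pos _)]
  simpa [add_mul, Pi.add_def] using h1.add (integrable_exp_neg_mul_sq hb)

lemma integrable_abs_mul_exp' (t₀ s : ℝ) (hs : 0 < s) :
    Integrable (fun x : ℝ => (|x - t₀| + 1) * rexp (-(x - t₀) ^ 2 / (4 * s ^ 2))) := by
  have hb : 0 < (4 * s ^ 2)⁻¹ := by positivity
  have h1 := (integrable_abs_mul_exp _ hb).comp_sub_right t₀
  refine h1.congr ?_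
  filter_upwards with x
  congr 1
  rw [show -(x - t₀) ^ 2 / (4 * s ^ 2) = -(4 * s ^ 2)⁻¹ * (x - t₀) ^ 2 by ring]

lemma integrable_abs_gaussian : Integrable (fun x : ℝ => |x|) (gaussianReal 0 1) := by
  rw [gaussianReal_of_var_ne_zero 0 one_ne_zero]
  have h1 : gaussianPDF 0 1
      = fun x => (((fun y => (gaussianPDFReal 0 1 y).toNNReal) x : ℝ≥0) : ℝ≥0∞) := rfl
  rw [h1, integrable_withDensity_iff_integrable_smul
    ((measurable_gaussianPDFReal 0 1).real_toNNReal)]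
  have key : Integrable (fun x : ℝ => (√(2 * π))⁻¹ * ((|x| + 1) * rexp (-(2)⁻¹ * x ^ 2))) :=
    (integrable_abs_mul_exp _ (by norm_num)).const_mul _
  refine key.mono' ?_ ?_
  · exact (((measurable_gaussianPDFReal 0 1).real_toNNReal).smul measurable_abs).aestronglyMeasurable
  · filter_upwards with x
    rw [NNReal.smul_def, Real.coe_toNNReal _ (gaussianPDFReal_nonneg 0 1 x), smul_eq_mul]
    rw [Real.norm_eq_abs, abs_mul, abs_of_nonneg (gaussianPDFReal_nonneg 0 1 x), abs_abs]
    simp only [gaussianPDFReal, NNReal.coe_one, mul_one, sub_zero]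
    rw [show -x ^ 2 / (2:ℝ) = -(2:ℝ)⁻¹ * x ^ 2 by ring]
    have h2 : (0:ℝ) < rexp (-(2:ℝ)⁻¹ * x ^ 2) := exp_pos _
    have h3 : (0:ℝ) < (√(2 * π))⁻¹ := by positivity
    nlinarith [abs_nonneg x]

lemma oneDim (f1 : ℝ → ℝ) (hm : Measurable f1) (C : ℝ) (hC : ∀ x, |f1 x| ≤ C)
    (s : ℝ) (hs : 0 < s) (t₀ : ℝ) :
    HasDerivAt (fun t => ∫ y, f1 (t + y * s) ∂(gaussianReal 0 1))
      (s⁻¹ * ∫ y, y * f1 (t₀ + y * s) ∂(gaussianReal 0 1)) t₀ := by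
  have hC0 : 0 ≤ C := le_trans (abs_nonneg _) (hC 0)
  set v : ℝ≥0 := ⟨s ^ 2, sq_nonneg s⟩ with hv_def
  have hv : v ≠ 0 := by
    intro h
    have : (v : ℝ) = 0 := by rw [h]; rfl
    exact (by positivity : (0:ℝ) < s ^ 2).ne' this
  have hvc : (v : ℝ) = s ^ 2 := rfl
  have hs2 : (0:ℝ) < s ^ 2 := by positivity
  -- change of variables
  have hchg : ∀ (t : ℝ) (g : ℝ → ℝ), Measurable g →
      ∫ y, g (t + y * s) ∂(gaussianReal 0 1) = ∫ x, gaussianPDFReal t v x * g x := by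
    intro t g hg
    calc ∫ y, g (t + y * s) ∂(gaussianReal 0 1)
        = ∫ x, g x ∂(Measure.map (fun y : ℝ => t + y * s) (gaussianReal 0 1)) :=
          (integral_map (by fun_prop) hg.aestronglyMeasurable).symm
      _ = ∫ x, g x ∂(gaussianReal t v) := by rw [map_affine]
      _ = ∫ x, gaussianPDFReal t v x * g x := integral_gaussianReal_eq t hv g
  have hrw : (fun t => ∫ y, f1 (t + y * s) ∂(gaussianReal 0 1))
      = fun t => ∫ x, gaussianPDFReal t v x * f1 x := funext fun t => hchg t f1 hm
  rw [hrw]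
  -- dominated differentiation
  set F' : ℝ → ℝ → ℝ := fun t x => (x - t) / (v : ℝ) * gaussianPDFReal t v x * f1 x with hF'
  set bound : ℝ → ℝ :=
    fun x => (C / s ^ 2 * (√(2 * π * (v : ℝ)))⁻¹ * rexp (1 / (2 * s ^ 2)))
      * ((|x - t₀| + 1) * rexp (-(x - t₀) ^ 2 / (4 * s ^ 2))) with hbd
  have key := hasDerivAt_integral_of_dominated_loc_of_deriv_le (F := fun t x =>
      gaussianPDFReal t v x * f1 x) (F' := F') (bound := bound) (μ := volume) (x₀ := t₀)
      (Metric.ball_mem_nhds t₀ one_pos)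
    (Filter.Eventually.of_forall fun t =>
      ((measurable_gaussianPDFReal t v).mul hm).aestronglyMeasurable)
    (by
      refine Integrable.mono' ((integrable_gaussianPDFReal t₀ v).const_mul C) ?_ ?_
      · exact ((measurable_gaussianPDFReal t₀ v).mul hm).aestronglyMeasurable
      · filter_upwards with x
        rw [Real.norm_eq_abs, abs_mul, abs_of_nonneg (gaussianPDFReal_nonneg _ _ _), mul_comm C]
        exact mul_le_mul_of_nonneg_left (hC x) (gaussianPDFReal_nonneg _ _ _))
    ((((measurable_id.sub_const t₀).div_const _).mul
        (measurable_gaussianPDFReal t₀ v)).mul hm).aestronglyMeasurable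
    (by
      filter_upwards with x
      intro t ht
      have hb : |t - t₀| ≤ 1 := le_of_lt (by simpa [Real.dist_eq] using ht)
      have hxt : |x - t| ≤ |x - t₀| + 1 := by
        calc |x - t| = |(x - t₀) - (t - t₀)| := by ring_nf
          _ ≤ |x - t₀| + |t - t₀| := abs_sub _ _
          _ ≤ |x - t₀| + 1 := by linarith
      have hexp : rexp (-(x - t) ^ 2 / (2 * s ^ 2))
          ≤ rexp (1 / (2 * s ^ 2)) * rexp (-(x - t₀) ^ 2 / (4 * s ^ 2)) := by
        rw [← Real.exp_add, Real.exp_le_exp]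
        have h2 : (t - t₀) ^ 2 ≤ 1 := by nlinarith [sq_abs (t - t₀), abs_nonneg (t - t₀)]
        have core : -(x - t) ^ 2 ≤ 1 - (x - t₀) ^ 2 / 2 := by
          nlinarith [sq_nonneg ((x - t₀) - 2 * (t - t₀)), h2]
        calc -(x - t) ^ 2 / (2 * s ^ 2) ≤ (1 - (x - t₀) ^ 2 / 2) / (2 * s ^ 2) := by gcongr
          _ = 1 / (2 * s ^ 2) + -(x - t₀) ^ 2 / (4 * s ^ 2) := by ring
      have hpdf : gaussianPDFReal t v x
          ≤ (√(2 * π * (v : ℝ)))⁻¹ * (rexp (1 / (2 * s ^ 2)) * rexp (-(x - t₀) ^ 2 / (4 * s ^ 2))) := by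
        rw [gaussianPDFReal]
        rw [hvc]
        exact mul_le_mul_of_nonneg_left hexp (by positivity)
      calc ‖F' t x‖ = |x - t| / s ^ 2 * gaussianPDFReal t v x * |f1 x| := by
            rw [Real.norm_eq_abs, abs_mul, abs_mul, abs_div, hvc,
              abs_of_nonneg (gaussianPDFReal_nonneg _ _ _), abs_of_pos hs2]
        _ ≤ (|x - t₀| + 1) / s ^ 2
            * ((√(2 * π * (v : ℝ)))⁻¹ * (rexp (1 / (2 * s ^ 2)) * rexp (-(x - t₀) ^ 2 / (4 * s ^ 2))))
            * C := by
            have h1 : |x - t| / s ^ 2 ≤ (|x - t₀| + 1) / s ^ 2 := by gcongr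
            exact mul_le_mul (mul_le_mul h1 hpdf (gaussianPDFReal_nonneg _ _ _) (by positivity))
              (hC x) (abs_nonneg _) (by positivity)
        _ = bound x := by rw [hbd]; ring)
    ((integrable_abs_mul_exp' t₀ s hs).const_mul _)
    (by
      filter_upwards with x
      intro t ht
      exact (pdf_hasDerivAt v x t).mul_const (f1 x))
  -- identify the derivative value
  refine key.2.congr_deriv (Eq.symm ?_)
  have hmg : Measurable (fun x => (x - t₀) / s * f1 x) := by fun_prop
  have h2 : (fun y : ℝ => y * f1 (t₀ + y * s))
      = fun y => (fun x => (x - t₀) / s * f1 x) (t₀ + y * s) := by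
    funext y
    simp only []
    rw [add_sub_cancel_left, mul_div_cancel_right₀ _ hs.ne']
  rw [h2, hchg t₀ _ hmg, ← integral_const_mul]
  congr 1
  funext x
  rw [hF', hvc]
  field_simp

lemma pi_split {n : ℕ} (i : Fin (n + 1)) (g : (Fin (n + 1) → ℝ) → ℝ)
    (hint : Integrable (fun p : ℝ × (Fin n → ℝ) => g (i.insertNth p.1 p.2))
      ((gaussianReal 0 1).prod (Measure.pi fun _ : Fin n => gaussianReal 0 1))) :
    ∫ y, g y ∂(Measure.pi fun _ : Fin (n + 1) => gaussianReal 0 1)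
      = ∫ z, ∫ x, g (i.insertNth x z) ∂(gaussianReal 0 1)
          ∂(Measure.pi fun _ : Fin n => gaussianReal 0 1) := by
  have mp := measurePreserving_piFinSuccAbove (fun _ : Fin (n + 1) => gaussianReal 0 1) i
  have hemb := (MeasurableEquiv.piFinSuccAbove (fun _ : Fin (n + 1) => ℝ) i).measurableEmbedding
  have h1 := mp.integral_comp hemb (fun p : ℝ × (Fin n → ℝ) => g (i.insertNth p.1 p.2))
  have h2 : (fun y : Fin (n + 1) → ℝ =>
      (fun p : ℝ × (Fin n → ℝ) => g (i.insertNth p.1 p.2))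
        (MeasurableEquiv.piFinSuccAbove (fun _ : Fin (n + 1) => ℝ) i y)) = g := by
    funext y
    simp [MeasurableEquiv.piFinSuccAbove, Fin.insertNthEquiv, Fin.insertNth_self_removeNth]
  rw [h2] at h1
  rw [show (∫ y, g y ∂(Measure.pi fun _ : Fin (n + 1) => gaussianReal 0 1)) = _ from h1,
    MeasureTheory.integral_prod _ hint]
  exact integral_integral_swap hint

end GradGaussAux

open GradGaussAux

theorem grad_mean_gaussian_smoothing (d : ℕ) (μ σ : Fin d → ℝ) (hσ : ∀ i, 0 < σ i)
    (f : (Fin d → ℝ) → ℝ) (hf : Measurable f) (C : ℝ) (hC : ∀ x, |f x| ≤ C) (i : Fin d) :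
    HasDerivAt
      (fun t : ℝ => ∫ y, f (fun j => Function.update μ i t j + y j * σ j)
        ∂(Measure.pi fun _ : Fin d => gaussianReal 0 1))
      ((σ i)⁻¹ * ∫ y, y i * f (fun j => μ j + y j * σ j)
        ∂(Measure.pi fun _ : Fin d => gaussianReal 0 1))
      (μ i) := by
  have hd : d ≠ 0 := fun h => (h ▸ i).elim0
  obtain ⟨n, rfl⟩ : ∃ n, d = n + 1 := ⟨d - 1, by omega⟩
  have hC0 : 0 ≤ C := le_trans (abs_nonneg _) (hC fun _ => 0)
  set γ : Measure ℝ := gaussianReal 0 1 with hγ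
  set Γ : Measure (Fin (n + 1) → ℝ) := Measure.pi fun _ => gaussianReal 0 1 with hΓ
  set Γ' : Measure (Fin n → ℝ) := Measure.pi fun _ => gaussianReal 0 1 with hΓ'
  set q : (Fin n → ℝ) → ℝ → ℝ :=
    fun z u => f (Function.update (fun j => μ j + (Fin.insertNth (α := fun _ => ℝ) i 0 z) j * σ j) i u) with hq_def
  have hqjoint : Measurable (fun p : (Fin n → ℝ) × ℝ => q p.1 p.2) := by
    apply hf.comp
    apply measurable_pi_lambda
    intro j
    rcases eq_or_ne j i with rfl | hj
    · simpa only [Function.update_self] using measurable_snd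
    · simp only [Function.update_of_ne hj]
      obtain ⟨k, hk⟩ := Fin.exists_succAbove_eq hj
      subst hk
      simp only [Fin.insertNth_apply_succAbove]
      exact measurable_const.add (((measurable_pi_apply k).comp measurable_fst).mul_const _)
  have hqz : ∀ z, Measurable (q z) :=
    fun z => hqjoint.comp (measurable_const.prodMk measurable_id)
  have hqC : ∀ z u, |q z u| ≤ C := fun z u => hC _
  -- claim A
  have hA : ∀ (t x : ℝ) (z : Fin n → ℝ),
      f (fun j => Function.update μ i t j + (Fin.insertNth (α := fun _ => ℝ) i x z) j * σ j) = q z (t + x * σ i) := by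
    intro t x z
    congr 1
    funext j
    rcases eq_or_ne j i with rfl | hj
    · simp [Fin.insertNth_apply_same]
    · obtain ⟨k, hk⟩ := Fin.exists_succAbove_eq hj
      subst hk
      simp [Function.update_of_ne hj, Fin.insertNth_apply_succAbove]
  -- rewrite the function via Fubini
  have hfun : ∀ t : ℝ, (∫ y, f (fun j => Function.update μ i t j + y j * σ j) ∂Γ)
      = ∫ z, ∫ x, q z (t + x * σ i) ∂γ ∂Γ' := by
    intro t
    have hgm : Measurable (fun y : Fin (n + 1) → ℝ =>
        f (fun j => Function.update μ i t j + y j * σ j)) := by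
      apply hf.comp
      exact measurable_pi_lambda _ fun j =>
        measurable_const.add ((measurable_pi_apply j).mul_const _)
    have hint : Integrable (fun p : ℝ × (Fin n → ℝ) =>
        (fun y : Fin (n + 1) → ℝ => f (fun j => Function.update μ i t j + y j * σ j))
          (i.insertNth p.1 p.2)) (γ.prod Γ') := by
      constructor
      · exact (hgm.comp
          (MeasurableEquiv.piFinSuccAbove (fun _ : Fin (n + 1) => ℝ) i).symm.measurable
          ).aestronglyMeasurable
      · exact HasFiniteIntegral.of_bounded (C := C) (Filter.Eventually.of_forall fun p => hC _)
    rw [pi_split i _ hint]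
    congr 1
    funext z
    congr 1
    funext x
    exact hA t x z
  have hfun2 : (fun t : ℝ => ∫ y, f (fun j => Function.update μ i t j + y j * σ j) ∂Γ)
      = fun t => ∫ z, ∫ x, q z (t + x * σ i) ∂γ ∂Γ' := funext hfun
  rw [hfun2]
  -- dominated differentiation over Γ'
  set K : ℝ := ∫ x, |x| ∂γ with hK
  have hK0 : 0 ≤ K := integral_nonneg fun x => abs_nonneg x
  set F' : ℝ → (Fin n → ℝ) → ℝ :=
    fun t z => (σ i)⁻¹ * ∫ x, x * q z (t + x * σ i) ∂γ with hF'def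
  have hGm : ∀ t : ℝ, AEStronglyMeasurable (fun z => ∫ x, q z (t + x * σ i) ∂γ) Γ' := by
    intro t
    have : Measurable (fun p : (Fin n → ℝ) × ℝ => q p.1 (t + p.2 * σ i)) :=
      hqjoint.comp (measurable_fst.prodMk (measurable_const.add (measurable_snd.mul_const _)))
    exact this.aestronglyMeasurable.integral_prod_right'
  have hxqm : ∀ t : ℝ, Measurable (fun p : (Fin n → ℝ) × ℝ => p.2 * q p.1 (t + p.2 * σ i)) :=
    fun t => measurable_snd.mul
      (hqjoint.comp (measurable_fst.prodMk (measurable_const.add (measurable_snd.mul_const _))))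
  have hxq_int : ∀ (z : Fin n → ℝ) (t : ℝ), Integrable (fun x => x * q z (t + x * σ i)) γ := by
    intro z t
    refine (integrable_abs_gaussian.const_mul C).mono' ?_ ?_
    · exact (measurable_id.mul ((hqz z).comp
        (measurable_const.add (measurable_id.mul_const _)))).aestronglyMeasurable
    · filter_upwards with x
      show ‖x * q z (t + x * σ i)‖ ≤ C * |x|
      rw [Real.norm_eq_abs, abs_mul, mul_comm C]
      exact mul_le_mul_of_nonneg_left (hqC z _) (abs_nonneg x)
  have hxq_bd : ∀ (z : Fin n → ℝ) (t : ℝ), |∫ x, x * q z (t + x * σ i) ∂γ| ≤ C * K := by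
    intro z t
    have h1 := norm_integral_le_of_norm_le (μ := γ)
      (f := fun x => x * q z (t + x * σ i)) (g := fun x => C * |x|)
      (integrable_abs_gaussian.const_mul C)
      (Filter.Eventually.of_forall fun x => by
        show ‖x * q z (t + x * σ i)‖ ≤ C * |x|
        rw [Real.norm_eq_abs, abs_mul, mul_comm C]
        exact mul_le_mul_of_nonneg_left (hqC z _) (abs_nonneg x))
    rw [integral_const_mul] at h1
    exact h1
  have key := hasDerivAt_integral_of_dominated_loc_of_deriv_le
    (F := fun t z => ∫ x, q z (t + x * σ i) ∂γ) (F' := F')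
    (bound := fun _ => (σ i)⁻¹ * (C * K)) (μ := Γ') (x₀ := μ i) (Metric.ball_mem_nhds (μ i) one_pos)
    (Filter.Eventually.of_forall fun t => hGm t)
    (by
      refine (integrable_const C).mono' (hGm (μ i)) ?_
      filter_upwards with z
      rw [Real.norm_eq_abs]
      have h1 := norm_integral_le_of_norm_le (μ := γ)
        (f := fun x => q z (μ i + x * σ i)) (g := fun _ => C)
        (integrable_const C) (Filter.Eventually.of_forall fun x => hqC z _)
      simpa using h1)
    (by
      have : Measurable (fun p : (Fin n → ℝ) × ℝ => p.2 * q p.1 (μ i + p.2 * σ i)) := hxqm (μ i)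
      exact (this.aestronglyMeasurable.integral_prod_right').const_mul _)
    (by
      filter_upwards with z
      intro t ht
      rw [Real.norm_eq_abs, hF'def, abs_mul, abs_of_pos (inv_pos.mpr (hσ i))]
      exact mul_le_mul_of_nonneg_left (hxq_bd z t) (inv_pos.mpr (hσ i)).le)
    (integrable_const _)
    (by
      filter_upwards with z
      intro t ht
      exact oneDim (q z) (hqz z) C (fun u => hqC z u) (σ i) (hσ i) t)
  refine key.2.congr_deriv (Eq.symm ?_)
  -- identify the value
  set g : (Fin (n + 1) → ℝ) → ℝ := fun y => y i * f (fun j => μ j + y j * σ j) with hg_def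
  have hupdate : Function.update μ i (μ i) = μ := Function.update_eq_self i μ
  have hAg : ∀ (x : ℝ) (z : Fin n → ℝ), g (i.insertNth x z) = x * q z (μ i + x * σ i) := by
    intro x z
    have h1 := hA (μ i) x z
    simp only [hupdate] at h1
    rw [hg_def]
    simp only [Fin.insertNth_apply_same]
    rw [h1]
  have hint : Integrable (fun p : ℝ × (Fin n → ℝ) => g (i.insertNth p.1 p.2)) (γ.prod Γ') := by
    simp only [hAg]
    have hb : Integrable (fun p : ℝ × (Fin n → ℝ) => (C * |p.1|) * 1) (γ.prod Γ') :=
      Integrable.mul_prod (integrable_abs_gaussian.const_mul C) (integrable_const 1)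
    refine hb.mono' ?_ ?_
    · exact (measurable_fst.mul (hqjoint.comp (measurable_snd.prodMk
        (measurable_const.add (measurable_fst.mul_const _))))).aestronglyMeasurable
    · filter_upwards with p
      rw [Real.norm_eq_abs, abs_mul, mul_one, mul_comm C]
      exact mul_le_mul_of_nonneg_left (hqC _ _) (abs_nonneg _)
  have hsplit := pi_split i g hint
  simp only [hAg] at hsplit
  rw [show (∫ y, y i * f (fun j => μ j + y j * σ j) ∂Γ) = ∫ y, g y ∂Γ from rfl, hsplit]
  rw [← integral_const_mul]
end

section
/- Let y ∼ N(0,1) be a standard univariate Gaussian, μ ∈ ℝ, σ > 0, and f: ℝ → ℝ bounded measurable. Then the derivative with respect to σ² of E[f(μ + yσ)] equals (1/(2σ²))·E[(y² − 1)·f(μ + yσ)]. -/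
open MeasureTheory ProbabilityTheory Real Filter Metric
open scoped NNReal ENNReal

noncomputable def gpdf (μ v x : ℝ) : ℝ :=
  (Real.sqrt (2 * Real.pi * v))⁻¹ * Real.exp (-(x - μ) ^ 2 / (2 * v))

lemma gpdf_eq (μ : ℝ) {v : ℝ} (hv : 0 ≤ v) (x : ℝ) :
    gaussianPDFReal μ v.toNNReal x = gpdf μ v x := by
  simp [gaussianPDFReal, gpdf, Real.coe_toNNReal v hv, neg_div]

lemma gpdf_pos (μ : ℝ) {v : ℝ} (hv : 0 < v) (x : ℝ) : 0 < gpdf μ v x := by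
  have : 0 < Real.sqrt (2 * Real.pi * v) := Real.sqrt_pos.mpr (by positivity)
  exact mul_pos (inv_pos.mpr this) (Real.exp_pos _)

lemma gpdf_measurable (μ v : ℝ) : Measurable (fun x => gpdf μ v x) := by
  unfold gpdf; fun_prop

lemma gpdf_integrable (μ : ℝ) {v : ℝ} (hv : 0 < v) : Integrable (fun x => gpdf μ v x) := by
  have := integrable_gaussianPDFReal μ v.toNNReal
  refine this.congr (Eventually.of_forall fun x => ?_)
  exact gpdf_eq μ hv.le x

lemma map_affine (μ : ℝ) {v : ℝ} (hv : 0 < v) :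
    (gaussianReal 0 1).map (fun y => μ + y * Real.sqrt v) = gaussianReal μ v.toNNReal := by
  have h1 : (gaussianReal 0 1).map (· * Real.sqrt v) = gaussianReal 0 v.toNNReal := by
    rw [gaussianReal_map_mul_const (Real.sqrt v)]
    congr 1
    · ring
    · refine NNReal.coe_injective ?_
      simp [Real.sq_sqrt hv.le, Real.coe_toNNReal v hv.le]
  calc (gaussianReal 0 1).map (fun y => μ + y * Real.sqrt v)
      = ((gaussianReal 0 1).map (· * Real.sqrt v)).map (μ + ·) := by
        rw [Measure.map_map (by fun_prop) (by fun_prop)]; rfl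
    _ = gaussianReal μ v.toNNReal := by
        rw [h1, gaussianReal_map_const_add]; norm_num

lemma integral_comp_affine (μ : ℝ) {v : ℝ} (hv : 0 < v) {g : ℝ → ℝ} (hg : Measurable g) :
    ∫ y, g (μ + y * Real.sqrt v) ∂(gaussianReal 0 1)
      = ∫ x, g x ∂(gaussianReal μ v.toNNReal) := by
  rw [← map_affine μ hv, integral_map (by fun_prop) hg.aestronglyMeasurable]

lemma integral_gaussianReal_eq (μ : ℝ) {v : ℝ} (hv : 0 < v) (g : ℝ → ℝ) :
    ∫ x, g x ∂(gaussianReal μ v.toNNReal) = ∫ x, g x * gpdf μ v x := by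
  have hvne : v.toNNReal ≠ 0 := by
    simp only [ne_eq, Real.toNNReal_eq_zero, not_le]; exact hv
  rw [gaussianReal_of_var_ne_zero μ hvne]
  have hd : gaussianPDF μ v.toNNReal
      = fun x => ((Real.toNNReal (gaussianPDFReal μ v.toNNReal x) : ℝ≥0) : ℝ≥0∞) := rfl
  rw [hd, integral_withDensity_eq_integral_smul
    ((measurable_gaussianPDFReal μ v.toNNReal).real_toNNReal) g]
  refine integral_congr_ae (Eventually.of_forall fun x => ?_)
  show (gaussianPDFReal μ v.toNNReal x).toNNReal • g x = g x * gpdf μ v x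
  rw [NNReal.smul_def, Real.coe_toNNReal _ (gaussianPDFReal_nonneg μ _ x), gpdf_eq μ hv.le,
    smul_eq_mul, mul_comm]

lemma hasDerivAt_gpdf (μ x : ℝ) {v : ℝ} (hv : 0 < v) :
    HasDerivAt (fun w => gpdf μ w x)
      (gpdf μ v x * ((x - μ) ^ 2 / (2 * v ^ 2) - 1 / (2 * v))) v := by
  have hs : 0 < 2 * Real.pi * v := by positivity
  have hspos : 0 < Real.sqrt (2 * Real.pi * v) := Real.sqrt_pos.mpr hs
  have hsq : Real.sqrt (2 * Real.pi * v) ^ 2 = 2 * Real.pi * v := Real.sq_sqrt hs.le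
  have hlin : HasDerivAt (fun w : ℝ => 2 * Real.pi * w) (2 * Real.pi) v := by
    simpa using (hasDerivAt_id v).const_mul (2 * Real.pi)
  have h1 : HasDerivAt (fun w : ℝ => Real.sqrt (2 * Real.pi * w))
      (1 / (2 * Real.sqrt (2 * Real.pi * v)) * (2 * Real.pi)) v :=
    (Real.hasDerivAt_sqrt hs.ne').comp v hlin
  have h2 := h1.inv hspos.ne'
  have hl2 : HasDerivAt (fun w : ℝ => 2 * w) 2 v := by
    simpa using (hasDerivAt_id v).const_mul (2 : ℝ)
  have h3 : HasDerivAt (fun w : ℝ => -(x - μ) ^ 2 / (2 * w))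
      ((0 * (2 * v) - (-(x - μ) ^ 2) * 2) / (2 * v) ^ 2) v :=
    (hasDerivAt_const v (-(x - μ) ^ 2)).div hl2 (by positivity)
  have h4 := h3.exp
  have h5 := h2.mul h4
  have hfin : HasDerivAt (fun w => gpdf μ w x)
      (-(1 / (2 * Real.sqrt (2 * Real.pi * v)) * (2 * Real.pi)) / Real.sqrt (2 * Real.pi * v) ^ 2 *
          Real.exp (-(x - μ) ^ 2 / (2 * v)) +
        (Real.sqrt (2 * Real.pi * v))⁻¹ *
          (Real.exp (-(x - μ) ^ 2 / (2 * v)) *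
            ((0 * (2 * v) - -(x - μ) ^ 2 * 2) / (2 * v) ^ 2))) v := h5
  convert hfin using 1
  simp only [gpdf]
  set s := Real.sqrt (2 * Real.pi * v) with hsdef
  have hpi : 2 * Real.pi = s ^ 2 / v := by rw [hsq]; field_simp
  rw [hpi]
  field_simp
  ring

theorem deriv_variance_gaussian_smoothing (μ σ : ℝ) (hσ : 0 < σ)
    (f : ℝ → ℝ) (hf : Measurable f) (C : ℝ) (hC : ∀ x, |f x| ≤ C) :
    HasDerivAt
      (fun v : ℝ => ∫ y, f (μ + y * Real.sqrt v) ∂(gaussianReal 0 1))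
      ((2 * σ ^ 2)⁻¹ * ∫ y, (y ^ 2 - 1) * f (μ + y * σ) ∂(gaussianReal 0 1))
      (σ ^ 2) := by
  set v₀ : ℝ := σ ^ 2 with hv₀def
  have hv₀ : 0 < v₀ := by positivity
  have hC0 : 0 ≤ C := le_trans (abs_nonneg _) (hC 0)
  set F : ℝ → ℝ → ℝ := fun v x => f x * gpdf μ v x with hF
  set F' : ℝ → ℝ → ℝ :=
    fun v x => f x * (gpdf μ v x * ((x - μ) ^ 2 / (2 * v ^ 2) - 1 / (2 * v))) with hF'
  set bound : ℝ → ℝ := fun x => C * ((Real.sqrt (Real.pi * v₀))⁻¹ *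
      Real.exp (-(1 / (3 * v₀)) * (x - μ) ^ 2) *
      (2 / v₀ ^ 2 * (x - μ) ^ 2 + 1 / v₀)) with hbound
  have hball : ∀ v ∈ ball v₀ (v₀ / 2), v₀ / 2 < v ∧ v < 3 * v₀ / 2 := by
    intro v hv
    rw [Metric.mem_ball, Real.dist_eq, abs_lt] at hv
    constructor <;> linarith [hv.1, hv.2]
  have hmeas : ∀ v : ℝ, AEStronglyMeasurable (F v) volume :=
    fun v => ((hf.mul (gpdf_measurable μ v)).aestronglyMeasurable)
  have hint : Integrable (F v₀) volume := by
    refine Integrable.bdd_mul (gpdf_integrable μ hv₀) hf.aestronglyMeasurable (c := C) (Eventually.of_forall fun x => ?_)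
    rw [Real.norm_eq_abs]; exact hC x
  have hF'meas : AEStronglyMeasurable (F' v₀) volume := by
    refine (hf.mul ((gpdf_measurable μ v₀).mul (by fun_prop))).aestronglyMeasurable
  have h_bound : ∀ᵐ x ∂(volume : Measure ℝ), ∀ v ∈ ball v₀ (v₀ / 2), ‖F' v x‖ ≤ bound x := by
    refine Eventually.of_forall fun x => fun v hv => ?_
    obtain ⟨hv1, hv2⟩ := hball v hv
    have hvpos : 0 < v := lt_trans (by positivity) hv1
    set c : ℝ := (x - μ) ^ 2 with hcdef
    have hc : 0 ≤ c := sq_nonneg _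
    have hgp := gpdf_pos μ hvpos x
    have habs : |c / (2 * v ^ 2) - 1 / (2 * v)| ≤ c / (2 * v ^ 2) + 1 / (2 * v) := by
      have p1 : 0 ≤ c / (2 * v ^ 2) := by positivity
      have p2 : 0 ≤ 1 / (2 * v) := by positivity
      rw [abs_le]; constructor <;> linarith
    have hstep1 : ‖F' v x‖ ≤ C * (gpdf μ v x * (c / (2 * v ^ 2) + 1 / (2 * v))) := by
      rw [hF', Real.norm_eq_abs, abs_mul, abs_mul, abs_of_pos hgp]
      refine mul_le_mul (hC x) (mul_le_mul_of_nonneg_left habs hgp.le)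
        (by positivity) hC0
    refine hstep1.trans ?_
    rw [hbound]
    refine mul_le_mul_of_nonneg_left ?_ hC0
    have hpdf : gpdf μ v x ≤ (Real.sqrt (Real.pi * v₀))⁻¹ *
        Real.exp (-(1 / (3 * v₀)) * c) := by
      rw [gpdf, ← hcdef]
      refine mul_le_mul ?_ ?_ (Real.exp_pos _).le (by positivity)
      · refine inv_anti₀ (Real.sqrt_pos.mpr (by positivity)) ?_
        refine Real.sqrt_le_sqrt ?_
        nlinarith [Real.pi_pos]
      · rw [Real.exp_le_exp]
        rw [neg_div, neg_mul, neg_le_neg_iff, one_div, inv_mul_eq_div,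
          div_le_div_iff₀ (by positivity) (by positivity)]
        nlinarith [mul_le_mul_of_nonneg_left (show 2 * v ≤ 3 * v₀ by linarith) hc]
    have hpoly : c / (2 * v ^ 2) + 1 / (2 * v) ≤ 2 / v₀ ^ 2 * c + 1 / v₀ := by
      have h1 : c / (2 * v ^ 2) ≤ 2 / v₀ ^ 2 * c := by
        rw [div_mul_eq_mul_div, div_le_div_iff₀ (by positivity) (by positivity)]
        nlinarith [mul_le_mul_of_nonneg_left (show v₀ ^ 2 ≤ 4 * v ^ 2 by nlinarith) hc]
      have h2 : 1 / (2 * v) ≤ 1 / v₀ := by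
        rw [div_le_div_iff₀ (by positivity) (by positivity)]; linarith
      linarith
    exact mul_le_mul hpdf hpoly (by positivity) (by positivity)
  have hbint : Integrable bound volume := by
    have hk : (0 : ℝ) < 1 / (3 * v₀) := by positivity
    have i1 : Integrable (fun x : ℝ => x ^ 2 * Real.exp (-(1 / (3 * v₀)) * x ^ 2)) := by
      refine (integrable_rpow_mul_exp_neg_mul_sq hk
        (by norm_num : (-1 : ℝ) < 2)).congr (Eventually.of_forall fun x => ?_)
      show x ^ ((2 : ℝ)) * Real.exp (-(1 / (3 * v₀)) * x ^ 2)
          = x ^ (2 : ℕ) * Real.exp (-(1 / (3 * v₀)) * x ^ 2)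
      rw [show ((2 : ℝ) = ((2 : ℕ) : ℝ)) by norm_num, Real.rpow_natCast]
    have i2 : Integrable (fun x : ℝ => Real.exp (-(1 / (3 * v₀)) * x ^ 2)) :=
      integrable_exp_neg_mul_sq hk
    have i3 : Integrable (fun x : ℝ =>
        2 / v₀ ^ 2 * (x ^ 2 * Real.exp (-(1 / (3 * v₀)) * x ^ 2)) +
        1 / v₀ * Real.exp (-(1 / (3 * v₀)) * x ^ 2)) :=
      (i1.const_mul _).add (i2.const_mul _)
    have i4 := (i3.comp_sub_right μ).const_mul (C * (Real.sqrt (Real.pi * v₀))⁻¹)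
    refine i4.congr (Eventually.of_forall fun x => ?_)
    rw [hbound]; ring
  have h_diff : ∀ᵐ x ∂(volume : Measure ℝ), ∀ v ∈ ball v₀ (v₀ / 2),
      HasDerivAt (F · x) (F' v x) v := by
    refine Eventually.of_forall fun x v hv => ?_
    have hvpos : 0 < v := lt_trans (by positivity) (hball v hv).1
    exact (hasDerivAt_gpdf μ x hvpos).const_mul (f x)
  have key := hasDerivAt_integral_of_dominated_loc_of_deriv_le (ball_mem_nhds v₀ (by positivity : (0:ℝ) < v₀ / 2))
    (Eventually.of_forall hmeas) hint hF'meas h_bound hbint h_diff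
  have hDeriv : HasDerivAt (fun v => ∫ x, F v x) (∫ x, F' v₀ x) v₀ := key.2
  -- identify the functions near v₀
  have hEqOn : ∀ v ∈ Set.Ioi (0 : ℝ),
      (∫ y, f (μ + y * Real.sqrt v) ∂(gaussianReal 0 1)) = ∫ x, F v x := by
    intro v hv
    rw [integral_comp_affine μ hv hf, integral_gaussianReal_eq μ hv]
  have hEv : (fun v : ℝ => ∫ y, f (μ + y * Real.sqrt v) ∂(gaussianReal 0 1))
      =ᶠ[nhds v₀] (fun v => ∫ x, F v x) :=
    eventuallyEq_of_mem (isOpen_Ioi.mem_nhds hv₀) hEqOn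
  -- identify the derivative value
  have hval : (2 * σ ^ 2)⁻¹ * ∫ y, (y ^ 2 - 1) * f (μ + y * σ) ∂(gaussianReal 0 1)
      = ∫ x, F' v₀ x := by
    have hg : Measurable (fun x => (((x - μ) / σ) ^ 2 - 1) * f x) := by fun_prop
    have h1 : (fun y : ℝ => (y ^ 2 - 1) * f (μ + y * σ))
        = fun y => (((μ + y * Real.sqrt v₀ - μ) / σ) ^ 2 - 1) * f (μ + y * Real.sqrt v₀) := by
      funext y
      rw [hv₀def, Real.sqrt_sq hσ.le]
      congr 2
      field_simp
      ring
    rw [h1, integral_comp_affine μ hv₀ hg, integral_gaussianReal_eq μ hv₀, ← integral_const_mul]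
    refine integral_congr_ae (Eventually.of_forall fun x => ?_)
    rw [hF', hv₀def]
    have hσ2 : (σ : ℝ) ≠ 0 := hσ.ne'
    field_simp
  rw [hval]
  exact hDeriv.congr_of_eventuallyEq hEv
end

section
/- Let Q: ℝ → ℝ be measurable, V ∈ ℝ, and define F(a) = 𝟙{Q(a) > V} and G(μ, σ) = E_{y∼N(0,1)}[F(μ + yσ)]. Define μ' = E_{a∼N(μ,σ²)}[μ·𝟙{Q(a) ≤ V} + (μ + ν(a−μ))·𝟙{Q(a) > V}]. Then μ' = μ + ν σ² ∇_μ G(μ, σ). -/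
open MeasureTheory ProbabilityTheory Real

private lemma integral_gaussianReal_eq' (m : ℝ) {w : NNReal} (hw : w ≠ 0) (g : ℝ → ℝ) :
    ∫ a, g a ∂(gaussianReal m w) = ∫ a, gaussianPDFReal m w a * g a := by
  rw [gaussianReal_of_var_ne_zero _ hw]
  have h1 : volume.withDensity (gaussianPDF m w)
      = volume.withDensity (fun x => ((gaussianPDFReal m w x).toNNReal : ENNReal)) := by
    rfl
  rw [h1, integral_withDensity_eq_integral_smul ((measurable_gaussianPDFReal m w).real_toNNReal) g]
  congr 1; ext a
  rw [NNReal.smul_def, Real.coe_toNNReal _ (gaussianPDFReal_nonneg _ _ _), smul_eq_mul]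

private lemma gaussianReal_map_aff (m σ : ℝ) :
    (gaussianReal 0 1).map (fun y => m + y * σ) = gaussianReal m (Real.toNNReal (σ ^ 2)) := by
  have h : (fun y : ℝ => m + y * σ) = (fun y => y + m) ∘ (fun y => σ * y) := by
    ext y; simp [Function.comp]; ring
  rw [h, ← Measure.map_map (measurable_id'.add_const m) (measurable_const_mul σ)]
  rw [show (fun y : ℝ => σ * y) = (σ * ·) from rfl, gaussianReal_map_const_mul σ,
    show (fun y : ℝ => y + m) = (· + m) from rfl, gaussianReal_map_add_const m]
  congr 1
  · simp
  · ext; simp [Real.coe_toNNReal _ (sq_nonneg σ)]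

private lemma hasDerivAt_gaussianPDFReal' (σ : ℝ) (hσ : 0 < σ) (a m : ℝ) :
    HasDerivAt (fun m => gaussianPDFReal m (Real.toNNReal (σ ^ 2)) a)
      (gaussianPDFReal m (Real.toNNReal (σ ^ 2)) a * ((a - m) / σ ^ 2)) m := by
  have hv : ((Real.toNNReal (σ ^ 2) : NNReal) : ℝ) = σ ^ 2 := Real.coe_toNNReal _ (sq_nonneg σ)
  have h0 : HasDerivAt (fun m : ℝ => a - m) (-1) m := (hasDerivAt_id m).const_sub a
  have h1 : HasDerivAt (fun m : ℝ => -(a - m) ^ 2 / (2 * ((Real.toNNReal (σ ^ 2) : NNReal) : ℝ)))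
      ((a - m) / σ ^ 2) m := by
    have h2 := ((h0.pow 2).neg).div_const (2 * ((Real.toNNReal (σ ^ 2) : NNReal) : ℝ))
    refine h2.congr_deriv ?_
    rw [hv]
    have : (σ:ℝ)^2 ≠ 0 := by positivity
    field_simp
    ring
  have h3 := (h1.exp).const_mul ((√(2 * π * ((Real.toNNReal (σ ^ 2) : NNReal) : ℝ)))⁻¹)
  refine HasDerivAt.congr_deriv h3 ?_
  rw [gaussianPDFReal]; ring

theorem target_mean_es_gradient_step (Q : ℝ → ℝ) (hQ : Measurable Q) (V μ σ ν : ℝ)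
    (hσ : 0 < σ) (hν : ν ∈ Set.Ioc (0:ℝ) 1) :
    HasDerivAt
      (fun m : ℝ => ∫ y, (if V < Q (m + y * σ) then (1:ℝ) else 0) ∂(gaussianReal 0 1))
      ((ν * σ ^ 2)⁻¹ *
        ((∫ a, (μ * (if Q a ≤ V then (1:ℝ) else 0)
            + (μ + ν * (a - μ)) * (if V < Q a then (1:ℝ) else 0))
          ∂(gaussianReal μ (Real.toNNReal (σ ^ 2)))) - μ))
      μ := by
  obtain ⟨hν0, -⟩ := hν
  have hνne : ν ≠ 0 := ne_of_gt hν0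
  have hs2 : (0:ℝ) < σ ^ 2 := by positivity
  set v : NNReal := Real.toNNReal (σ ^ 2) with hvdef
  have hv : ((v : NNReal) : ℝ) = σ ^ 2 := Real.coe_toNNReal _ (sq_nonneg σ)
  have hv0 : v ≠ 0 := by
    rw [hvdef, ne_eq, Real.toNNReal_eq_zero, not_le]; exact hs2
  set f : ℝ → ℝ := fun a => if V < Q a then (1:ℝ) else 0 with hfdef
  have hf_meas : Measurable f :=
    Measurable.ite (measurableSet_lt measurable_const hQ) measurable_const measurable_const
  have hfabs : ∀ a, |f a| ≤ 1 := by
    intro a; rw [hfdef]; dsimp only; split <;> norm_num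
  set c0 : ℝ := (√(2 * π * (v:ℝ)))⁻¹ with hc0def
  have hc0 : 0 ≤ c0 := by positivity
  have hpdf_eq : ∀ m a, gaussianPDFReal m v a = c0 * rexp (-(a - m)^2 / (2 * (v:ℝ))) := by
    intro m a; rw [gaussianPDFReal]
  -- Step 1: change of variables
  have step1 : ∀ m : ℝ, (∫ y, (if V < Q (m + y * σ) then (1:ℝ) else 0) ∂(gaussianReal 0 1))
      = ∫ a, gaussianPDFReal m v a * f a := by
    intro m
    have hmap := gaussianReal_map_aff m σ
    have hmeas : Measurable fun y : ℝ => m + y * σ := (measurable_id.mul_const σ).const_add m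
    have := integral_map (μ := gaussianReal 0 1) (φ := fun y : ℝ => m + y * σ)
      hmeas.aemeasurable (f := f) hf_meas.aestronglyMeasurable
    rw [hmap] at this
    rw [show (∫ y, (if V < Q (m + y * σ) then (1:ℝ) else 0) ∂(gaussianReal 0 1))
        = ∫ y, f (m + y * σ) ∂(gaussianReal 0 1) from rfl, ← this,
      integral_gaussianReal_eq' m hv0 f]
  -- Step 2: derivative of the smoothed function
  have hb4 : (0:ℝ) < (4 * σ ^ 2)⁻¹ := by positivity
  have hb2 : (0:ℝ) < (2 * σ ^ 2)⁻¹ := by positivity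
  set C : ℝ := c0 * rexp ((2 * σ ^ 2)⁻¹) * (σ ^ 2)⁻¹ with hCdef
  set bound : ℝ → ℝ :=
    fun a => C * ((|a - μ| + 1) * rexp (-(4 * σ ^ 2)⁻¹ * (a - μ) ^ 2)) with hbdef
  have hF'meas : AEStronglyMeasurable
      (fun a => gaussianPDFReal μ v a * ((a - μ) / σ ^ 2) * f a) volume :=
    (((measurable_gaussianPDFReal μ v).mul
      ((measurable_id.sub_const μ).div_const _)).mul hf_meas).aestronglyMeasurable
  have hFint : Integrable (fun a => gaussianPDFReal μ v a * f a) := by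
    refine (integrable_gaussianPDFReal μ v).mono'
      (((measurable_gaussianPDFReal μ v).mul hf_meas).aestronglyMeasurable)
      (ae_of_all _ fun a => ?_)
    rw [norm_mul, Real.norm_eq_abs, Real.norm_eq_abs,
      abs_of_nonneg (gaussianPDFReal_nonneg _ _ _)]
    calc gaussianPDFReal μ v a * |f a| ≤ gaussianPDFReal μ v a * 1 :=
          mul_le_mul_of_nonneg_left (hfabs a) (gaussianPDFReal_nonneg _ _ _)
      _ = gaussianPDFReal μ v a := mul_one _
  have hbound_int : Integrable bound := by
    have hbase : Integrable (fun x : ℝ => (|x| + 1) * rexp (-(4 * σ ^ 2)⁻¹ * x ^ 2)) := by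
      refine ((integrable_mul_exp_neg_mul_sq hb4).abs.add
        (integrable_exp_neg_mul_sq hb4)).congr (ae_of_all _ fun x => ?_)
      simp only [Pi.add_apply]
      rw [abs_mul, abs_of_nonneg (Real.exp_pos _).le]
      ring
    exact ((hbase.comp_sub_right μ).const_mul C).congr (ae_of_all _ fun a => rfl)
  have h_bound : ∀ᵐ a ∂(volume : Measure ℝ), ∀ m ∈ Metric.ball μ 1,
      ‖gaussianPDFReal m v a * ((a - m) / σ ^ 2) * f a‖ ≤ bound a := by
    refine ae_of_all _ fun a m hm => ?_
    rw [Metric.mem_ball, Real.dist_eq] at hm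
    have hm2 : (m - μ) ^ 2 < 1 := by
      rw [← sq_abs]; exact pow_lt_one₀ (abs_nonneg _) hm two_ne_zero
    have hp0 : 0 ≤ gaussianPDFReal m v a := gaussianPDFReal_nonneg _ _ _
    have h3 : |a - m| ≤ |a - μ| + 1 := by
      have h4 := abs_sub_le a μ m
      have h5 : |μ - m| ≤ 1 := by rw [abs_sub_comm]; exact hm.le
      linarith
    have hpdf : gaussianPDFReal m v a
        ≤ c0 * rexp ((2 * σ ^ 2)⁻¹ + -(4 * σ ^ 2)⁻¹ * (a - μ) ^ 2) := by
      rw [hpdf_eq m a, hv]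
      refine mul_le_mul_of_nonneg_left (Real.exp_le_exp.2 ?_) hc0
      rw [div_le_iff₀ (by positivity : (0:ℝ) < 2 * σ ^ 2)]
      have expand : ((2 * σ ^ 2)⁻¹ + -(4 * σ ^ 2)⁻¹ * (a - μ) ^ 2) * (2 * σ ^ 2)
          = 1 - (a - μ) ^ 2 / 2 := by field_simp; ring
      rw [expand]
      nlinarith [sq_nonneg (a - 2 * m + μ)]
    calc ‖gaussianPDFReal m v a * ((a - m) / σ ^ 2) * f a‖
        = gaussianPDFReal m v a * (|a - m| / σ ^ 2) * |f a| := by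
          rw [norm_mul, norm_mul, Real.norm_eq_abs, Real.norm_eq_abs, Real.norm_eq_abs,
            abs_div, abs_of_nonneg hp0, abs_of_nonneg hs2.le]
      _ ≤ gaussianPDFReal m v a * ((|a - μ| + 1) / σ ^ 2) * 1 := by
          refine mul_le_mul (mul_le_mul_of_nonneg_left ?_ hp0) (hfabs a) (abs_nonneg _)
            (mul_nonneg hp0 (by positivity))
          exact (div_le_div_iff_of_pos_right hs2).2 h3
      _ = gaussianPDFReal m v a * ((|a - μ| + 1) / σ ^ 2) := mul_one _
      _ ≤ (c0 * rexp ((2 * σ ^ 2)⁻¹ + -(4 * σ ^ 2)⁻¹ * (a - μ) ^ 2)) * ((|a - μ| + 1) / σ ^ 2) :=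
          mul_le_mul_of_nonneg_right hpdf (by positivity)
      _ = bound a := by
          rw [hbdef, hCdef]; dsimp only
          rw [Real.exp_add]
          field_simp
  have h_diff : ∀ᵐ a ∂(volume : Measure ℝ), ∀ m ∈ Metric.ball μ 1,
      HasDerivAt (fun m => gaussianPDFReal m v a * f a)
        (gaussianPDFReal m v a * ((a - m) / σ ^ 2) * f a) m :=
    ae_of_all _ fun a m _ => (hasDerivAt_gaussianPDFReal' σ hσ a m).mul_const (f a)
  have main := hasDerivAt_integral_of_dominated_loc_of_deriv_le (μ := volume)
    (F := fun m a => gaussianPDFReal m v a * f a)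
    (F' := fun m a => gaussianPDFReal m v a * ((a - m) / σ ^ 2) * f a)
    (x₀ := μ) (bound := bound) (Metric.ball_mem_nhds μ one_pos)
    (Filter.Eventually.of_forall fun m =>
      ((measurable_gaussianPDFReal m v).mul hf_meas).aestronglyMeasurable)
    hFint hF'meas h_bound hbound_int h_diff
  have hderiv : HasDerivAt (fun m => ∫ a, gaussianPDFReal m v a * f a)
      (∫ a, gaussianPDFReal μ v a * ((a - μ) / σ ^ 2) * f a) μ := main.2
  -- Step 3: identify the derivative value
  set J : ℝ := ∫ a, gaussianPDFReal μ v a * ((a - μ) * f a) with hJdef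
  have hJint : Integrable (fun a => gaussianPDFReal μ v a * ((a - μ) * f a)) := by
    have hmaj : Integrable (fun a : ℝ => c0 * |(a - μ) * rexp (-(2 * σ ^ 2)⁻¹ * (a - μ) ^ 2)|) :=
      ((integrable_mul_exp_neg_mul_sq hb2).abs.comp_sub_right μ).const_mul c0
    refine hmaj.mono'
      ((((measurable_gaussianPDFReal μ v).mul
        ((measurable_id.sub_const μ).mul hf_meas))).aestronglyMeasurable)
      (ae_of_all _ fun a => ?_)
    rw [norm_mul, Real.norm_eq_abs, Real.norm_eq_abs, abs_of_nonneg (gaussianPDFReal_nonneg _ _ _),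
      abs_mul]
    have h1 : |a - μ| * |f a| ≤ |a - μ| * 1 :=
      mul_le_mul_of_nonneg_left (hfabs a) (abs_nonneg _)
    calc gaussianPDFReal μ v a * (|a - μ| * |f a|)
        ≤ gaussianPDFReal μ v a * (|a - μ| * 1) :=
          mul_le_mul_of_nonneg_left h1 (gaussianPDFReal_nonneg _ _ _)
      _ = c0 * |(a - μ) * rexp (-(2 * σ ^ 2)⁻¹ * (a - μ) ^ 2)| := by
          rw [hpdf_eq μ a, hv, abs_mul, abs_of_nonneg (Real.exp_pos _).le]
          have harg : -(a - μ) ^ 2 / (2 * σ ^ 2) = -(2 * σ ^ 2)⁻¹ * (a - μ) ^ 2 := by ring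
          rw [harg]; ring
  have hI : (∫ a, (μ * (if Q a ≤ V then (1:ℝ) else 0)
      + (μ + ν * (a - μ)) * (if V < Q a then (1:ℝ) else 0)) ∂(gaussianReal μ v))
      = μ + ν * J := by
    rw [integral_gaussianReal_eq' μ hv0]
    have point : (fun a => gaussianPDFReal μ v a * (μ * (if Q a ≤ V then (1:ℝ) else 0)
        + (μ + ν * (a - μ)) * (if V < Q a then (1:ℝ) else 0)))
        = fun a => μ * gaussianPDFReal μ v a
          + ν * (gaussianPDFReal μ v a * ((a - μ) * f a)) := by
      funext a
      rw [hfdef]; dsimp only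
      by_cases h : V < Q a
      · rw [if_pos h, if_neg (not_le.mpr h)]; ring
      · rw [if_neg h, if_pos (not_lt.mp h)]; ring
    rw [point, integral_add ((integrable_gaussianPDFReal μ v).const_mul μ) (hJint.const_mul ν),
      integral_const_mul, integral_const_mul, integral_gaussianPDFReal_eq_one μ hv0, mul_one,
      ← hJdef]
  have hval : (ν * σ ^ 2)⁻¹ * ((μ + ν * J) - μ)
      = ∫ a, gaussianPDFReal μ v a * ((a - μ) / σ ^ 2) * f a := by
    have hpoint : (fun a => gaussianPDFReal μ v a * ((a - μ) / σ ^ 2) * f a)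
        = fun a => (σ ^ 2)⁻¹ * (gaussianPDFReal μ v a * ((a - μ) * f a)) := by
      funext a; field_simp
    rw [hpoint, integral_const_mul, ← hJdef]
    field_simp
    ring
  rw [show (fun m : ℝ => ∫ y, (if V < Q (m + y * σ) then (1:ℝ) else 0) ∂(gaussianReal 0 1))
      = fun m => ∫ a, gaussianPDFReal m v a * f a from funext step1, hI, hval]
  exact hderiv
end

section
/- Let f(x) = exp(−(x−μ)²/(2σ²)) and D = (a, b) ⊂ ℝ a bounded interval with σ > 0. Then the pair of fixed-point equations μ·∫_D f(x) dx = ∫_D x f(x) dx and σ²·∫_D f(x) dx = ∫_D (x−μ)² f(x) dx hold if and only if ∫_D f'(x) dx = 0 and ∫_D f''(x) dx = 0, i.e., f(a) = f(b) and f'(a) = f'(b). -/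
open MeasureTheory

theorem fixed_point_iff_boundary (μ σ a b : ℝ) (hσ : 0 < σ) (hab : a < b)
    (f : ℝ → ℝ) (hf : f = fun x => Real.exp (-(x - μ) ^ 2 / (2 * σ ^ 2))) :
    ((μ * ∫ x in Set.Ioo a b, f x = ∫ x in Set.Ioo a b, x * f x)
      ∧ (σ ^ 2 * ∫ x in Set.Ioo a b, f x = ∫ x in Set.Ioo a b, (x - μ) ^ 2 * f x)
      ↔ ((∫ x in Set.Ioo a b, deriv f x = 0) ∧ (∫ x in Set.Ioo a b, deriv (deriv f) x = 0)))
    ∧ (((∫ x in Set.Ioo a b, deriv f x = 0) ∧ (∫ x in Set.Ioo a b, deriv (deriv f) x = 0))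
      ↔ (f a = f b ∧ deriv f a = deriv f b)) := by
  have hσ2 : (σ : ℝ) ^ 2 ≠ 0 := by positivity
  have hfc : Continuous f := by subst hf; fun_prop
  -- first derivative
  have hfd : ∀ x : ℝ, HasDerivAt f ((-(x - μ) / σ ^ 2) * f x) x := by
    intro x
    have h1 : HasDerivAt (fun x : ℝ => -(x - μ) ^ 2 / (2 * σ ^ 2))
        (-(x - μ) / σ ^ 2) x := by
      have h0 : HasDerivAt (fun x : ℝ => x - μ) 1 x := (hasDerivAt_id x).sub_const μ
      have h2 := ((h0.pow 2).neg).div_const (2 * σ ^ 2)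
      refine h2.congr_deriv ?_
      field_simp
      ring
    have h3 := h1.exp
    rw [hf]
    convert h3 using 1
    show -(x - μ) / σ ^ 2 * Real.exp (-(x - μ) ^ 2 / (2 * σ ^ 2))
        = Real.exp (-(x - μ) ^ 2 / (2 * σ ^ 2)) * (-(x - μ) / σ ^ 2)
    ring
  have hderiv : deriv f = fun x => (-(x - μ) / σ ^ 2) * f x := by
    funext x; exact (hfd x).deriv
  have hgc : Continuous (deriv f) := by
    rw [hderiv]; fun_prop
  -- second derivative
  have hgd : ∀ x : ℝ, HasDerivAt (deriv f)
      (((x - μ) ^ 2 / σ ^ 4 - 1 / σ ^ 2) * f x) x := by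
    intro x
    have hc : HasDerivAt (fun x : ℝ => -(x - μ) / σ ^ 2) (-1 / σ ^ 2) x := by
      have h0 : HasDerivAt (fun x : ℝ => x - μ) 1 x := (hasDerivAt_id x).sub_const μ
      have := (h0.neg).div_const (σ ^ 2)
      exact this
    have hmul := hc.mul (hfd x)
    rw [hderiv]
    refine hmul.congr_deriv ?_
    field_simp
    ring
  have hderiv2 : deriv (deriv f) = fun x => ((x - μ) ^ 2 / σ ^ 4 - 1 / σ ^ 2) * f x := by
    funext x; exact (hgd x).deriv
  have hhc : Continuous (deriv (deriv f)) := by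
    rw [hderiv2]; fun_prop
  -- integrability
  have hi0 : IntegrableOn f (Set.Ioo a b) :=
    (hfc.integrableOn_Icc).mono_set Set.Ioo_subset_Icc_self
  have hi1 : IntegrableOn (fun x => x * f x) (Set.Ioo a b) :=
    ((continuous_id.mul hfc).integrableOn_Icc).mono_set Set.Ioo_subset_Icc_self
  have hi2 : IntegrableOn (fun x => (x - μ) ^ 2 * f x) (Set.Ioo a b) :=
    ((((continuous_id.sub continuous_const).pow 2).mul hfc).integrableOn_Icc).mono_set
      Set.Ioo_subset_Icc_self
  -- integral of deriv f in terms of moments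
  have key1 : (∫ x in Set.Ioo a b, deriv f x)
      = (1 / σ ^ 2) * ((μ * ∫ x in Set.Ioo a b, f x) - ∫ x in Set.Ioo a b, x * f x) := by
    have e : ∀ x : ℝ, deriv f x = (1 / σ ^ 2) * (μ * f x - x * f x) := by
      intro x; rw [hderiv]; field_simp; ring
    simp_rw [e]
    rw [integral_const_mul, integral_sub (hi0.const_mul μ) hi1, integral_const_mul]
  have key2 : (∫ x in Set.Ioo a b, deriv (deriv f) x)
      = (1 / σ ^ 2) * ((1 / σ ^ 2) * (∫ x in Set.Ioo a b, (x - μ) ^ 2 * f x)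
          - ∫ x in Set.Ioo a b, f x) := by
    have e : ∀ x : ℝ, deriv (deriv f) x
        = (1 / σ ^ 2) * ((1 / σ ^ 2) * ((x - μ) ^ 2 * f x) - f x) := by
      intro x; rw [hderiv2]; field_simp
    simp_rw [e]
    rw [integral_const_mul, integral_sub (hi2.const_mul _) hi0, integral_const_mul]
  -- FTC
  have hIoo_g : (∫ x in Set.Ioo a b, deriv f x) = f b - f a := by
    rw [← MeasureTheory.integral_Ioc_eq_integral_Ioo, ← intervalIntegral.integral_of_le hab.le]
    exact intervalIntegral.integral_deriv_eq_sub (fun x _ => (hfd x).differentiableAt)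
      (hgc.intervalIntegrable a b)
  have hIoo_h : (∫ x in Set.Ioo a b, deriv (deriv f) x) = deriv f b - deriv f a := by
    rw [← MeasureTheory.integral_Ioc_eq_integral_Ioo, ← intervalIntegral.integral_of_le hab.le]
    exact intervalIntegral.integral_deriv_eq_sub (fun x _ => (hgd x).differentiableAt)
      (hhc.intervalIntegrable a b)
  have hinv : (1 : ℝ) / σ ^ 2 ≠ 0 := by positivity
  constructor
  · rw [key1, key2]
    constructor
    · rintro ⟨h1, h2⟩
      constructor
      · rw [h1, sub_self, mul_zero]
      · rw [← h2]; field_simp; ring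
    · rintro ⟨h1, h2⟩
      have h1' : (μ * ∫ x in Set.Ioo a b, f x) - ∫ x in Set.Ioo a b, x * f x = 0 :=
        (mul_eq_zero.mp h1).resolve_left hinv
      have h2' : (1 / σ ^ 2) * (∫ x in Set.Ioo a b, (x - μ) ^ 2 * f x)
          - ∫ x in Set.Ioo a b, f x = 0 :=
        (mul_eq_zero.mp h2).resolve_left hinv
      refine ⟨by linarith, ?_⟩
      have hC : (1 / σ ^ 2) * (∫ x in Set.Ioo a b, (x - μ) ^ 2 * f x)
          = ∫ x in Set.Ioo a b, f x := by linarith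
      calc σ ^ 2 * ∫ x in Set.Ioo a b, f x
          = σ ^ 2 * ((1 / σ ^ 2) * ∫ x in Set.Ioo a b, (x - μ) ^ 2 * f x) := by rw [hC]
        _ = ∫ x in Set.Ioo a b, (x - μ) ^ 2 * f x := by field_simp
  · rw [hIoo_g, hIoo_h]
    constructor
    · rintro ⟨h1, h2⟩
      exact ⟨(sub_eq_zero.mp h1).symm, (sub_eq_zero.mp h2).symm⟩
    · rintro ⟨h1, h2⟩
      exact ⟨by rw [h1, sub_self], by rw [h2, sub_self]⟩
end
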